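/- For positive integers n, m with n ≥ m and every integer ℓ ≥ 0, the quantity I = c_{ℓ+n+2m}(c_ℓ)² − 2 c_{ℓ+n} c_{ℓ+2m} c_ℓ + c_{ℓ+n} (c_{ℓ+m})² satisfies I ≥ G ≥ 0, where G = c_{ℓ+n+2m}(c_ℓ)² − c_{ℓ+n+m} c_{ℓ+m} c_ℓ − c_{ℓ+n} c_{ℓ+2m} c_ℓ + c_{ℓ+n} (c_{ℓ+m})². -/

import Mathlib

open MeasureTheory Real Nat

noncomputable def cauchy2 (n : ℕ) : ℝ :=
  ∫ x in (0:ℝ)..1, ∏ i ∈ Finset.range n, (x + i)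

/-!
Write `pₖ(x) = x (x + 1) ⋯ (x + k - 1)`, so that `pₖ₊₁ = pₖ · (x + k)` and `pₖ ≥ 0` on `[0, 1]`.
Cauchy–Schwarz for the measure `pₖ dx` gives `c_{k+1}² ≤ c_k ∫ pₖ (x + k)² ≤ c_k c_{k+2}`, so
`(c_k)` is log-convex and every ratio `c_{k+j} / c_k` is nondecreasing in `k`. With
`x = c_{ℓ+m}/c_ℓ`, `y = c_{ℓ+2m}/c_{ℓ+m}`, `u = c_{ℓ+n+m}/c_{ℓ+n}`, `v = c_{ℓ+n+2m}/c_{ℓ+n+m}`,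
one has `I - G = c_{ℓ+n} c_ℓ² x (u - y)` and `G = c_{ℓ+n} c_ℓ² ((u - x)(v - x) + x (v - y))`,
and monotonicity of the ratios gives `x ≤ y ≤ v`, `x ≤ u`, and `y ≤ u` when `m ≤ n`.
-/

open Finset Set

theorem sq_integral_mul_le_integral_mul_integral_mul_sq {α : Type*} [MeasurableSpace α]
    {μ : Measure α} {w g : α → ℝ} (hw : 0 ≤ᵐ[μ] w) (hw_int : Integrable w μ)
    (hwg : Integrable (fun a => w a * g a) μ) (hwg2 : Integrable (fun a => w a * g a ^ 2) μ) :
    (∫ a, w a * g a ∂μ) ^ 2 ≤ (∫ a, w a ∂μ) * ∫ a, w a * g a ^ 2 ∂μ := by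
  have hquad : ∀ t : ℝ, 0 ≤ (∫ a, w a ∂μ) * (t * t) + (-2 * ∫ a, w a * g a ∂μ) * t
      + ∫ a, w a * g a ^ 2 ∂μ := by
    intro t
    have hpt : ∀ a, w a * (g a - t) ^ 2 = w a * g a ^ 2 - 2 * t * (w a * g a) + t ^ 2 * w a :=
      fun a => by ring
    have hint : Integrable (fun a => w a * g a ^ 2 - 2 * t * (w a * g a)) μ :=
      hwg2.sub (hwg.const_mul _)
    have hexpand : ∫ a, w a * (g a - t) ^ 2 ∂μ = (∫ a, w a * g a ^ 2 ∂μ)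
        - 2 * t * (∫ a, w a * g a ∂μ) + t ^ 2 * ∫ a, w a ∂μ := by
      simp_rw [hpt]
      rw [integral_add hint (hw_int.const_mul _), integral_sub hwg2 (hwg.const_mul _),
        integral_const_mul, integral_const_mul]
    have hnonneg : 0 ≤ ∫ a, w a * (g a - t) ^ 2 ∂μ :=
      integral_nonneg_of_ae <| hw.mono fun a ha => mul_nonneg ha (sq_nonneg _)
    linarith
  have hdiscrim := discrim_le_zero hquad
  rw [discrim] at hdiscrim
  linarith

lemma monotone_div_succ_of_sq_le_mul {c : ℕ → ℝ} (hc : ∀ k, 0 < c k)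
    (hlc : ∀ k, c (k + 1) ^ 2 ≤ c k * c (k + 2)) : Monotone fun k => c (k + 1) / c k := by
  refine monotone_nat_of_le_succ fun k => ?_
  rw [div_le_div_iff₀ (hc k) (hc (k + 1)), ← sq, mul_comm]
  exact hlc k

lemma monotone_div_add_of_sq_le_mul {c : ℕ → ℝ} (hc : ∀ k, 0 < c k)
    (hlc : ∀ k, c (k + 1) ^ 2 ≤ c k * c (k + 2)) (j : ℕ) :
    Monotone fun k => c (k + j) / c k := by
  induction j with
  | zero => simp only [add_zero, div_self (hc _).ne']; exact monotone_const
  | succ j ih =>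
    have htelescope : (fun k => c (k + (j + 1)) / c k)
        = (fun k => c (k + j + 1) / c (k + j)) * fun k => c (k + j) / c k := by
      ext k
      rw [Pi.mul_apply, div_mul_div_cancel₀ (hc _).ne', add_assoc]
    rw [htelescope]
    exact ((monotone_div_succ_of_sq_le_mul hc hlc).comp (add_left_mono (a := j))).mul ih
      (fun k => (div_pos (hc _) (hc _)).le) (fun k => (div_pos (hc _) (hc _)).le)

theorem I_ge_G_ge_zero_of_sq_le_mul {c : ℕ → ℝ} (hc : ∀ k, 0 < c k)
    (hlc : ∀ k, c (k + 1) ^ 2 ≤ c k * c (k + 2)) {n m : ℕ} (l : ℕ) (hnm : m ≤ n) :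
    c (l + n + 2 * m) * c l ^ 2 - c (l + n + m) * c (l + m) * c l
        - c (l + n) * c (l + 2 * m) * c l + c (l + n) * c (l + m) ^ 2
      ≤ c (l + n + 2 * m) * c l ^ 2 - 2 * c (l + n) * c (l + 2 * m) * c l
        + c (l + n) * c (l + m) ^ 2
    ∧ 0 ≤ c (l + n + 2 * m) * c l ^ 2 - c (l + n + m) * c (l + m) * c l
        - c (l + n) * c (l + 2 * m) * c l + c (l + n) * c (l + m) ^ 2 := by
  have hratio := monotone_div_add_of_sq_le_mul hc hlc m
  simp only [two_mul m, ← add_assoc]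
  set x := c (l + m) / c l
  set y := c (l + m + m) / c (l + m)
  set u := c (l + n + m) / c (l + n)
  set v := c (l + n + m + m) / c (l + n + m)
  have hxu : x ≤ u := hratio (by omega : l ≤ l + n)
  have hxy : x ≤ y := hratio (by omega : l ≤ l + m)
  have hyu : y ≤ u := hratio (by omega : l + m ≤ l + n)
  have hyv : y ≤ v := hratio (by omega : l + m ≤ l + n + m)
  have hx0 : 0 ≤ x := (div_pos (hc _) (hc _)).le
  have hcv : c (l + n + m + m) = c (l + n + m) * v := (mul_div_cancel₀ _ (hc _).ne').symm
  have hcu : c (l + n + m) = c (l + n) * u := (mul_div_cancel₀ _ (hc _).ne').symm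
  have hcy : c (l + m + m) = c (l + m) * y := (mul_div_cancel₀ _ (hc _).ne').symm
  have hcx : c (l + m) = c l * x := (mul_div_cancel₀ _ (hc _).ne').symm
  rw [hcv, hcu, hcy, hcx]
  have hscale : 0 ≤ c (l + n) * c l ^ 2 := mul_nonneg (hc _).le (sq_nonneg _)
  constructor
  · linarith [mul_nonneg hscale (mul_nonneg hx0 (sub_nonneg.2 hyu))]
  · linarith [mul_nonneg hscale (add_nonneg
      (mul_nonneg (sub_nonneg.2 hxu) (sub_nonneg.2 (hxy.trans hyv)))
      (mul_nonneg hx0 (sub_nonneg.2 hyv)))]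

lemma continuous_prod_range_add_natCast (k : ℕ) :
    Continuous fun x : ℝ => ∏ i ∈ range k, (x + i) := by
  fun_prop

lemma cauchy2_eq_setIntegral (k : ℕ) :
    cauchy2 k = ∫ x in Ioc (0:ℝ) 1, ∏ i ∈ range k, (x + i) :=
  intervalIntegral.integral_of_le zero_le_one

lemma cauchy2_pos (k : ℕ) : 0 < cauchy2 k :=
  intervalIntegral.intervalIntegral_pos_of_pos_on
    ((continuous_prod_range_add_natCast k).intervalIntegrable 0 1)
    (fun x hx => prod_pos fun i _ => by have := hx.1; positivity) zero_lt_one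

lemma cauchy2_succ_sq_le (k : ℕ) : cauchy2 (k + 1) ^ 2 ≤ cauchy2 k * cauchy2 (k + 2) := by
  set p := fun x : ℝ => ∏ i ∈ range k, (x + i)
  have hp : Continuous p := continuous_prod_range_add_natCast k
  have hp0 : ∀ x ∈ Ioc (0:ℝ) 1, 0 ≤ p x := fun x hx =>
    prod_nonneg fun i _ => by have := hx.1; positivity
  have hsucc : cauchy2 (k + 1) = ∫ x in Ioc (0:ℝ) 1, p x * (x + k) := by
    rw [cauchy2_eq_setIntegral]
    simp only [prod_range_succ, p]
  have hsq_le : ∫ x in Ioc (0:ℝ) 1, p x * (x + k) ^ 2 ≤ cauchy2 (k + 2) := by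
    rw [cauchy2_eq_setIntegral]
    refine setIntegral_mono_on (hp.mul (by fun_prop)).integrableOn_Ioc
      (continuous_prod_range_add_natCast _).integrableOn_Ioc measurableSet_Ioc fun x hx => ?_
    simp only [prod_range_succ, p, cast_add, cast_one]
    nlinarith [hp0 x hx, hx.1.le]
  calc cauchy2 (k + 1) ^ 2
      ≤ (∫ x in Ioc (0:ℝ) 1, p x) * ∫ x in Ioc (0:ℝ) 1, p x * (x + k) ^ 2 := by
        rw [hsucc]
        exact sq_integral_mul_le_integral_mul_integral_mul_sq
          (ae_restrict_of_forall_mem measurableSet_Ioc hp0) hp.integrableOn_Ioc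
          (hp.mul (by fun_prop)).integrableOn_Ioc (hp.mul (by fun_prop)).integrableOn_Ioc
    _ ≤ cauchy2 k * cauchy2 (k + 2) := by
        rw [← cauchy2_eq_setIntegral]
        exact mul_le_mul_of_nonneg_left hsq_le (cauchy2_pos k).le

theorem cauchy2_I_ge_G_ge_zero_general (n m l : ℕ) (hnm : m ≤ n) :
    cauchy2 (l + n + 2 * m) * cauchy2 l ^ 2
        - cauchy2 (l + n + m) * cauchy2 (l + m) * cauchy2 l
        - cauchy2 (l + n) * cauchy2 (l + 2 * m) * cauchy2 l
        + cauchy2 (l + n) * cauchy2 (l + m) ^ 2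
      ≤ cauchy2 (l + n + 2 * m) * cauchy2 l ^ 2
        - 2 * cauchy2 (l + n) * cauchy2 (l + 2 * m) * cauchy2 l
        + cauchy2 (l + n) * cauchy2 (l + m) ^ 2
    ∧ 0 ≤ cauchy2 (l + n + 2 * m) * cauchy2 l ^ 2
        - cauchy2 (l + n + m) * cauchy2 (l + m) * cauchy2 l
        - cauchy2 (l + n) * cauchy2 (l + 2 * m) * cauchy2 l
        + cauchy2 (l + n) * cauchy2 (l + m) ^ 2 :=
  I_ge_G_ge_zero_of_sq_le_mul cauchy2_pos cauchy2_succ_sq_le l hnm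

theorem cauchy2_I_ge_G_ge_zero (n m l : ℕ) (hn : 0 < n) (hm : 0 < m) (hnm : m ≤ n) :
    cauchy2 (l + n + 2 * m) * cauchy2 l ^ 2
        - cauchy2 (l + n + m) * cauchy2 (l + m) * cauchy2 l
        - cauchy2 (l + n) * cauchy2 (l + 2 * m) * cauchy2 l
        + cauchy2 (l + n) * cauchy2 (l + m) ^ 2
      ≤ cauchy2 (l + n + 2 * m) * cauchy2 l ^ 2
        - 2 * cauchy2 (l + n) * cauchy2 (l + 2 * m) * cauchy2 l
        + cauchy2 (l + n) * cauchy2 (l + m) ^ 2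
    ∧ 0 ≤ cauchy2 (l + n + 2 * m) * cauchy2 l ^ 2
        - cauchy2 (l + n + m) * cauchy2 (l + m) * cauchy2 l
        - cauchy2 (l + n) * cauchy2 (l + 2 * m) * cauchy2 l
        + cauchy2 (l + n) * cauchy2 (l + m) ^ 2 :=
  cauchy2_I_ge_G_ge_zero_general n m l hnm
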